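/- arXiv:math/0511239 — 4 statements merged into one kernel-verified Lean document; each statement's English description precedes it below -/
import Mathlib

section
/- Let k and l be integers with k ≥ 0 and l ≥ 1. Then ∫₀¹ ((−ln(1−x))^k/(1−x)) · (−ln x)^l dx = k! · l! · ζ(l+1, 1,…,1), where the multiple zeta value has k trailing ones. -/
/-- The multiple zeta value ζ(m, 1,…,1) with k trailing ones:
the sum over n₁ > n₂ > ⋯ > n_{k+1} ≥ 1 of 1/(n₁^m · n₂ ⋯ n_{k+1}). -/
noncomputable def zetaOnes (m k : ℕ) : ℝ :=
  ∑' v : {f : Fin (k + 1) → ℕ // StrictAnti f ∧ ∀ i, 0 < f i},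
    ∏ i : Fin (k + 1), (1 : ℝ) / (v.1 i : ℝ) ^ (if i = 0 then m else 1)

set_option maxHeartbeats 1000000
open Real MeasureTheory Set

abbrev MzE (k : ℕ) := {f : Fin (k + 1) → ℕ // StrictAnti f ∧ ∀ i, 0 < f i}

lemma exp_neg_image : (fun t : ℝ => Real.exp (-t)) '' (Ioi 0) = Ioo 0 1 := by
  ext x
  constructor
  · rintro ⟨t, ht, rfl⟩
    exact ⟨Real.exp_pos _, Real.exp_lt_one_iff.mpr (by simpa using ht)⟩
  · rintro ⟨hx0, hx1⟩
    exact ⟨-Real.log x, by simpa using Real.log_neg hx0 hx1, by simp [Real.exp_log hx0]⟩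

lemma exp_neg_deriv (t : ℝ) : HasDerivAt (fun t : ℝ => Real.exp (-t)) (-Real.exp (-t)) t := by
  exact ((Real.hasDerivAt_exp (-t)).comp t (hasDerivAt_neg t)).congr_deriv (by simp)

lemma subst_exp_neg (g : ℝ → ℝ) :
    ∫ x in Ioo (0:ℝ) 1, g x = ∫ t in Ioi (0:ℝ), Real.exp (-t) * g (Real.exp (-t)) := by
  rw [← exp_neg_image]
  rw [MeasureTheory.integral_image_eq_integral_abs_deriv_smul measurableSet_Ioi
    (fun t _ => (exp_neg_deriv t).hasDerivWithinAt)
    (fun a _ b _ h => by simpa [Real.exp_injective.eq_iff] using h) g]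
  simp [abs_of_pos (Real.exp_pos _)]

lemma subst_exp_neg_integrableOn (g : ℝ → ℝ) :
    IntegrableOn g (Ioo (0:ℝ) 1) ↔
      IntegrableOn (fun t => Real.exp (-t) * g (Real.exp (-t))) (Ioi (0:ℝ)) := by
  rw [← exp_neg_image]
  rw [MeasureTheory.integrableOn_image_iff_integrableOn_abs_deriv_smul measurableSet_Ioi
    (fun t _ => (exp_neg_deriv t).hasDerivWithinAt)
    (fun a _ b _ h => by simpa [Real.exp_injective.eq_iff] using h) g]
  simp only [smul_eq_mul, abs_neg, abs_of_pos (Real.exp_pos _)]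

lemma exp_congr_aux (n l : ℕ) (hn : 0 < n) (t : ℝ) (_ht : t ∈ Ioi (0:ℝ)) :
    Real.exp (-t) * (Real.exp (-t) ^ (n-1) * (-Real.log (Real.exp (-t))) ^ l)
      = t ^ ((l+1:ℝ) - 1) * Real.exp (-((n:ℝ) * t)) := by
  rw [Real.log_exp]
  have key : Real.exp (-t) ^ (n-1) * Real.exp (-t) = Real.exp (-((n:ℝ)*t)) := by
    rw [← pow_succ, Nat.sub_add_cancel hn, ← Real.exp_nat_mul]
    ring_nf
  rw [show ((l+1:ℝ) - 1) = (l:ℝ) by ring, Real.rpow_natCast, neg_neg]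
  calc Real.exp (-t) * (Real.exp (-t) ^ (n-1) * t ^ l)
      = (Real.exp (-t) ^ (n-1) * Real.exp (-t)) * t ^ l := by ring
    _ = _ := by rw [key]; ring

lemma moment_integrableOn (n l : ℕ) (hn : 0 < n) :
    IntegrableOn (fun x : ℝ => x ^ (n-1) * (-Real.log x) ^ l) (Ioo (0:ℝ) 1) := by
  rw [subst_exp_neg_integrableOn]
  have h : IntegrableOn (fun t : ℝ => t ^ ((l:ℝ)) * Real.exp (-(n:ℝ) * t ^ (1:ℝ))) (Ioi (0:ℝ)) :=
    integrableOn_rpow_mul_exp_neg_mul_rpow (lt_of_lt_of_le (by norm_num) (Nat.cast_nonneg l)) zero_lt_one (by exact_mod_cast hn)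
  apply h.congr_fun ?_ measurableSet_Ioi
  intro t ht
  simp only
  rw [exp_congr_aux n l hn t ht, Real.rpow_one, show ((l:ℝ) + 1 - 1) = (l:ℝ) by ring]
  ring_nf

lemma moment (n l : ℕ) (hn : 0 < n) :
    ∫ x in Ioo (0:ℝ) 1, x ^ (n-1) * (-Real.log x) ^ l
      = (l.factorial : ℝ) / (n:ℝ) ^ (l+1) := by
  rw [subst_exp_neg]
  rw [MeasureTheory.setIntegral_congr_fun measurableSet_Ioi (exp_congr_aux n l hn)]
  rw [Real.integral_rpow_mul_exp_neg_mul_Ioi (by positivity) (by exact_mod_cast hn)]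
  rw [show (l+1:ℝ) = ((l : ℕ) + 1 : ℝ) by push_cast; ring]
  rw [Real.Gamma_nat_eq_factorial]
  rw [show ((l : ℕ) + 1 : ℝ) = ((l+1 : ℕ) : ℝ) by push_cast; ring, Real.rpow_natCast]
  rw [div_pow, one_pow]
  ring

noncomputable def mzE0 : ℕ ≃ MzE 0 :=
  Equiv.ofBijective (fun n => ⟨fun _ => n + 1,
      fun i j h => absurd (Fin.ext (by have := i.isLt; have := j.isLt; omega) : i = j) h.ne,
      fun _ => n.succ_pos⟩) (by
    constructor
    · intro a b h
      simpa using congrFun (congrArg Subtype.val h) 0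
    · rintro ⟨f, hf, hpos⟩
      refine ⟨f 0 - 1, Subtype.ext ?_⟩
      funext i
      have hi : i = 0 := Fin.ext (by have := i.isLt; omega)
      subst hi
      simp [Nat.sub_add_cancel (hpos 0)])

noncomputable def mzShift (m : ℕ) : ℕ ≃ {n : ℕ // m < n} :=
  Equiv.ofBijective (fun j => ⟨m + 1 + j, by omega⟩) (by
    constructor
    · intro a b h
      simpa using congrArg Subtype.val h
    · rintro ⟨n, hn⟩
      exact ⟨n - (m+1), by ext; simp; omega⟩)

noncomputable def mzCons (k : ℕ) : (Σ w : MzE k, {n : ℕ // w.1 0 < n}) ≃ MzE (k+1) :=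
  Equiv.ofBijective (fun p => ⟨Fin.cons p.2.1 p.1.1, by
      rw [Fin.strictAnti_iff_succ_lt]
      intro i
      induction i using Fin.cases with
      | zero => simpa using p.2.2
      | succ j =>
        simp only [Fin.cons_succ, ← Fin.succ_castSucc, Fin.cons_zero]
        exact p.1.2.1 (Fin.castSucc_lt_succ (i := j))
      , by
      intro i
      induction i using Fin.cases with
      | zero => simpa using lt_trans (p.1.2.2 0) p.2.2
      | succ j => simpa using p.1.2.2 j⟩) (by
    constructor
    · rintro ⟨w, n⟩ ⟨w', n'⟩ h
      have h' := congrArg Subtype.val h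
      simp only at h'
      have h0 : n.1 = n'.1 := by
        simpa using congrFun h' 0
      have hs : w.1 = w'.1 := by
        funext i
        simpa using congrFun h' i.succ
      cases w; cases w'; cases n; cases n'
      simp only at h0 hs
      subst h0; subst hs; rfl
    · rintro ⟨f, hf, hpos⟩
      refine ⟨⟨⟨fun i => f i.succ, fun i j hij => hf (Fin.succ_lt_succ_iff.mpr hij),
        fun i => hpos i.succ⟩, f 0, hf (Fin.succ_pos 0 : (0:Fin (k+2)) < Fin.succ 0)⟩, ?_⟩
      exact Subtype.ext (Fin.cons_self_tail f))

lemma hasSum_geom_shift {x : ℝ} (hx0 : 0 ≤ x) (hx1 : x < 1) (m : ℕ) :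
    HasSum (fun n : {n : ℕ // m < n} => x ^ (n.1 - 1)) (x ^ m / (1 - x)) := by
  rw [← Equiv.hasSum_iff (mzShift m)]
  have h2 : ((fun n : {n : ℕ // m < n} => x ^ (n.1 - 1)) ∘ (mzShift m))
      = fun j : ℕ => x ^ m * x ^ j := by
    funext j
    simp only [Function.comp_apply, mzShift, Equiv.ofBijective_apply]
    show x ^ (m + 1 + j - 1) = x ^ m * x ^ j
    rw [show m + 1 + j - 1 = m + j by omega, pow_add]
  rw [h2, div_eq_mul_inv]
  exact (hasSum_geometric_of_lt_one hx0 hx1).mul_left (x ^ m)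


lemma mzE0_apply (n : ℕ) : (mzE0 n).1 = fun _ => n + 1 := rfl

lemma mzCons_apply (k : ℕ) (p : Σ w : MzE k, {n : ℕ // w.1 0 < n}) :
    ((mzCons k) p).1 = Fin.cons p.2.1 p.1.1 := rfl

noncomputable def mzP (k : ℕ) (w : MzE k) : ℝ := ∏ i : Fin k, (w.1 i.succ : ℝ)

lemma mzP_pos (k : ℕ) (w : MzE k) : 0 < mzP k w :=
  Finset.prod_pos fun i _ => by exact_mod_cast w.2.2 i.succ

lemma hasSum_logpow (k : ℕ) : ∀ x : ℝ, 0 ≤ x → x < 1 →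
    HasSum (fun v : MzE k => x ^ (v.1 0 - 1) / ∏ i : Fin k, (v.1 i.succ : ℝ))
      ((-Real.log (1 - x)) ^ k / (k.factorial * (1 - x))) := by
  induction k with
  | zero =>
    intro x hx0 hx1
    rw [← Equiv.hasSum_iff mzE0]
    have h2 : ((fun v : MzE 0 => x ^ (v.1 0 - 1) / ∏ i : Fin 0, (v.1 i.succ : ℝ)) ∘ mzE0)
        = fun n : ℕ => x ^ n := by
      funext n
      simp [mzE0_apply]
    rw [h2, show ((-Real.log (1-x))^0 / ((Nat.factorial 0 : ℝ) * (1 - x))) = (1-x)⁻¹ by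
      simp]
    exact hasSum_geometric_of_lt_one hx0 hx1
  | succ k IH =>
    intro x hx0 hx1
    have h1x : (0:ℝ) < 1 - x := by linarith
    set P := mzP k with hP
    -- summability of the integrated series
    have hIH := IH x hx0 hx1
    have hSumm : Summable (fun w : MzE k => x ^ w.1 0 / (w.1 0 * P w)) := by
      refine Summable.of_nonneg_of_le (fun w => ?_) (fun w => ?_) hIH.summable
      · have h1 := mzP_pos k w
        have h2 := w.2.2 0
        positivity
      have h1 : x ^ w.1 0 ≤ x ^ (w.1 0 - 1) :=
        pow_le_pow_of_le_one hx0 hx1.le (by omega)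
      have hPw := mzP_pos k w
      have hw1 : (1:ℝ) ≤ (w.1 0 : ℝ) := by exact_mod_cast w.2.2 0
      calc x ^ w.1 0 / (w.1 0 * P w) ≤ x ^ w.1 0 / (1 * P w) := by gcongr
        _ = x ^ w.1 0 / P w := by rw [one_mul]
        _ ≤ x ^ (w.1 0 - 1) / P w := by gcongr
    -- term-by-term integral
    have hInt : ∀ w : MzE k, ∫ t in Ioo (0:ℝ) x, t ^ (w.1 0 - 1) / P w
        = x ^ w.1 0 / (w.1 0 * P w) := by
      intro w
      rw [integral_div, ← integral_Ioc_eq_integral_Ioo,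
        ← intervalIntegral.integral_of_le hx0, integral_pow]
      have hw0 : w.1 0 - 1 + 1 = w.1 0 := Nat.succ_pred_eq_of_pos (w.2.2 0)
      rw [hw0, zero_pow (w.2.2 0).ne', sub_zero, div_div,
        show ((w.1 0 - 1 : ℕ):ℝ) + 1 = (w.1 0 : ℝ) from by exact_mod_cast hw0]
    -- integrability of each term
    have hIntOn : ∀ w : MzE k,
        IntegrableOn (fun t : ℝ => t ^ (w.1 0 - 1) / P w) (Ioo 0 x) := by
      intro w
      exact (((continuous_pow _).div_const _).integrableOn_Icc (a := 0) (b := x)).mono_set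
        Ioo_subset_Icc_self
    -- the swap
    have hmeas : ∀ w : MzE k, AEStronglyMeasurable (fun t : ℝ => t ^ (w.1 0 - 1) / P w)
        (volume.restrict (Ioo 0 x)) := fun w =>
      ((continuous_pow _).div_const _).aestronglyMeasurable
    have hlint : ∀ w : MzE k,
        ∫⁻ t, ‖t ^ (w.1 0 - 1) / P w‖₊ ∂(volume.restrict (Ioo 0 x))
          = ENNReal.ofReal (x ^ w.1 0 / (w.1 0 * P w)) := by
      intro w
      have hae : 0 ≤ᵐ[volume.restrict (Ioo (0:ℝ) x)] fun t : ℝ => t ^ (w.1 0 - 1) / P w := by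
        filter_upwards [ae_restrict_mem measurableSet_Ioo] with t ht
        have := mzP_pos k w
        have := ht.1
        positivity
      rw [← hInt w, ofReal_integral_eq_lintegral_ofReal (hIntOn w) hae]
      apply lintegral_congr_ae
      filter_upwards [ae_restrict_mem measurableSet_Ioo] with t ht
      have h0 : (0:ℝ) ≤ t ^ (w.1 0 - 1) / P w := by
        have := mzP_pos k w
        have := ht.1
        positivity
      rw [← Real.enorm_eq_ofReal h0, enorm_eq_nnnorm]
    have hbound : (∑' w : MzE k, ∫⁻ t, ‖t ^ (w.1 0 - 1) / P w‖₊
        ∂(volume.restrict (Ioo 0 x))) ≠ ⊤ := by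
      rw [tsum_congr hlint, ← ENNReal.ofReal_tsum_of_nonneg (fun w => by have := mzP_pos k w; have := w.2.2 0; positivity) hSumm]
      exact ENNReal.ofReal_ne_top
    have hswap := MeasureTheory.integral_tsum hmeas hbound
    -- identify the integrand
    have hcongr : ∫ t in Ioo (0:ℝ) x, (∑' w : MzE k, t ^ (w.1 0 - 1) / P w)
        = ∫ t in Ioo (0:ℝ) x, (-Real.log (1 - t)) ^ k / (k.factorial * (1 - t)) := by
      apply setIntegral_congr_fun measurableSet_Ioo
      intro t ht
      exact (IH t ht.1.le (ht.2.trans hx1)).tsum_eq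
    -- FTC
    have hFTC : ∫ t in Ioo (0:ℝ) x, (-Real.log (1 - t)) ^ k / (k.factorial * (1 - t))
        = (-Real.log (1 - x)) ^ (k+1) / ((k+1).factorial : ℝ) := by
      rw [← integral_Ioc_eq_integral_Ioo, ← intervalIntegral.integral_of_le hx0]
      have hderiv : ∀ t ∈ uIcc (0:ℝ) x,
          HasDerivAt (fun t : ℝ => (-Real.log (1-t))^(k+1) / ((k+1).factorial : ℝ))
            ((-Real.log (1-t))^k / (k.factorial * (1-t))) t := by
        intro t ht
        rw [uIcc_of_le hx0] at ht
        have h1t : (0:ℝ) < 1 - t := by have := ht.2; linarith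
        have hlog : HasDerivAt (fun t : ℝ => -Real.log (1-t)) ((1-t)⁻¹) t := by
          have h1 : HasDerivAt (fun t : ℝ => 1 - t) (-1) t := (hasDerivAt_id t).const_sub 1
          have h2 := (Real.hasDerivAt_log h1t.ne').comp t h1
          refine h2.neg.congr_deriv ?_
          field_simp
        have := (hlog.pow (k+1)).div_const ((k+1).factorial : ℝ)
        refine this.congr_deriv ?_
        have hfac : ((k+1).factorial : ℝ) = (k+1) * (k.factorial : ℝ) := by
          rw [Nat.factorial_succ]; push_cast; ring
        rw [hfac]
        have hkf : (k.factorial : ℝ) ≠ 0 := by positivity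
        rw [Nat.add_sub_cancel]
        push_cast
        field_simp
      have hne : ∀ t ∈ uIcc (0:ℝ) x, 1 - t ≠ 0 := by
        intro t ht
        rw [uIcc_of_le hx0] at ht
        have : (0:ℝ) < 1 - t := by have := ht.2; linarith
        exact this.ne'
      have hcont : IntervalIntegrable
          (fun t : ℝ => (-Real.log (1-t))^k / (k.factorial * (1-t))) volume 0 x := by
        apply ContinuousOn.intervalIntegrable
        apply ContinuousOn.div
        · exact (Real.continuousOn_log.comp (continuous_const.sub continuous_id).continuousOn
            (fun t ht => by simpa using hne t ht)).neg.pow k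
        · exact (continuous_const.mul (continuous_const.sub continuous_id)).continuousOn
        · intro t ht
          have hkf : (0:ℝ) < (k.factorial : ℝ) := by positivity
          exact mul_ne_zero hkf.ne' (hne t ht)
      rw [intervalIntegral.integral_eq_sub_of_hasDerivAt hderiv hcont]
      simp [Real.log_one]
    -- the integrated HasSum
    have hA : HasSum (fun w : MzE k => x ^ w.1 0 / (w.1 0 * P w))
        ((-Real.log (1 - x)) ^ (k+1) / ((k+1).factorial : ℝ)) := by
      have h := hSumm.hasSum
      have : (∑' w : MzE k, x ^ w.1 0 / (w.1 0 * P w))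
          = (-Real.log (1 - x)) ^ (k+1) / ((k+1).factorial : ℝ) := by
        rw [← tsum_congr (fun w => hInt w), ← hswap, hcongr, hFTC]
      rwa [this] at h
    -- fibers
    have hfiber : ∀ w : MzE k,
        HasSum (fun n : {n : ℕ // w.1 0 < n} => x ^ (n.1 - 1) / (w.1 0 * P w))
          ((x ^ w.1 0 / (1 - x)) / (w.1 0 * P w)) := fun w =>
      (hasSum_geom_shift hx0 hx1 _).div_const _
    -- sigma summable
    set f : (Σ w : MzE k, {n : ℕ // w.1 0 < n}) → ℝ :=
      fun p => x ^ (p.2.1 - 1) / (p.1.1 0 * P p.1) with hf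
    have hfnn : ∀ p, 0 ≤ f p := fun p => by
      have := mzP_pos k p.1
      have := p.1.2.2 0
      positivity
    have hfibersum : (fun w : MzE k => ∑' n : {n : ℕ // w.1 0 < n}, f ⟨w, n⟩)
        = fun w : MzE k => (x ^ w.1 0 / (w.1 0 * P w)) / (1 - x) := by
      funext w
      rw [(hfiber w).tsum_eq]
      ring
    have hfs : Summable f := by
      rw [summable_sigma_of_nonneg hfnn]
      exact ⟨fun w => (hfiber w).summable, by rw [hfibersum]; exact hA.summable.div_const _⟩
    have htsum : ∑' p, f p
        = ((-Real.log (1 - x)) ^ (k+1) / ((k+1).factorial : ℝ)) / (1 - x) := by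
      rw [Summable.tsum_sigma' (fun w => (hfiber w).summable) hfs, hfibersum, tsum_div_const,
        hA.tsum_eq]
    -- transport
    rw [← Equiv.hasSum_iff (mzCons k)]
    have hcomp : ((fun v : MzE (k+1) => x ^ (v.1 0 - 1) / ∏ i : Fin (k+1), (v.1 i.succ : ℝ))
        ∘ (mzCons k)) = f := by
      funext p
      simp only [Function.comp_apply, mzCons_apply, hf]
      rw [Fin.cons_zero]
      congr 1
      rw [show (∏ i : Fin (k+1), ((Fin.cons p.2.1 p.1.1 : Fin (k+2) → ℕ) i.succ : ℝ))
          = ∏ i : Fin (k+1), (p.1.1 i : ℝ) from Finset.prod_congr rfl (by simp)]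
      rw [Fin.prod_univ_succ]
      rfl
    rw [hcomp]
    have := hfs.hasSum
    rw [htsum] at this
    convert this using 1
    field_simp


lemma hasSum_logpow' (k : ℕ) (x : ℝ) (h0 : 0 ≤ x) (h1 : x < 1) :
    HasSum (fun v : MzE k => x ^ (v.1 0 - 1) / mzP k v)
      ((-Real.log (1 - x)) ^ k / (k.factorial * (1 - x))) := hasSum_logpow k x h0 h1


section main
variable (k l : ℕ)

lemma meas_integrand :
    Measurable (fun x : ℝ => (-Real.log (1 - x)) ^ k / (1 - x) * (-Real.log x) ^ l) := by
  have h1 : Measurable fun x : ℝ => 1 - x := measurable_const.sub measurable_id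
  exact (((Real.measurable_log.comp h1).neg.pow_const k).div h1).mul
    (Real.measurable_log.neg.pow_const l)

lemma integrand_nonneg {x : ℝ} (hx : x ∈ Ioo (0:ℝ) 1) :
    0 ≤ (-Real.log (1 - x)) ^ k / (1 - x) * (-Real.log x) ^ l := by
  have h3 : (0:ℝ) < 1 - x := by have := hx.2; linarith
  have h1 : 0 ≤ -Real.log x := neg_nonneg.2 (Real.log_nonpos hx.1.le hx.2.le)
  have h2 : 0 ≤ -Real.log (1 - x) := neg_nonneg.2 (Real.log_nonpos h3.le (by have := hx.1; linarith))
  positivity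

lemma integrable_integrand (hl : 1 ≤ l) :
    IntegrableOn (fun x : ℝ => (-Real.log (1 - x)) ^ k / (1 - x) * (-Real.log x) ^ l)
      (Ioo (0:ℝ) 1) := by
  have hsub : Ioo (0:ℝ) 1 ⊆ Ioc (0:ℝ) 2⁻¹ ∪ Ioo (2⁻¹:ℝ) 1 := by
    intro x hx
    rcases le_or_gt x 2⁻¹ with h | h
    · exact Or.inl ⟨hx.1, h⟩
    · exact Or.inr ⟨h, hx.2⟩
  refine IntegrableOn.mono_set ?_ hsub
  apply IntegrableOn.union
  · -- near 0
    refine Integrable.mono' (g := fun x : ℝ => (2 * Real.log 2 ^ k) * (-Real.log x) ^ l) ?_ ?_ ?_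
    · have := (moment_integrableOn 1 l one_pos).mono_set
        (show Ioc (0:ℝ) 2⁻¹ ⊆ Ioo 0 1 by intro x hx; exact ⟨hx.1, lt_of_le_of_lt hx.2 (by norm_num)⟩)
      simpa using this.const_mul (2 * Real.log 2 ^ k)
    · exact ((meas_integrand k l).aestronglyMeasurable).restrict
    · filter_upwards [ae_restrict_mem measurableSet_Ioc] with x hx
      have hx1 : (0:ℝ) < x := hx.1
      have hx2 : x ≤ 2⁻¹ := hx.2
      have h3 : (0:ℝ) < 1 - x := by linarith [show x < 1 by linarith [hx2]; ]
      have hxIoo : x ∈ Ioo (0:ℝ) 1 := ⟨hx1, by linarith⟩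
      rw [Real.norm_of_nonneg (integrand_nonneg k l hxIoo)]
      have hlogx : 0 ≤ -Real.log x := neg_nonneg.2 (Real.log_nonpos hx1.le (by linarith))
      have hlog2 : 0 ≤ -Real.log (1 - x) :=
        neg_nonneg.2 (Real.log_nonpos h3.le (by linarith))
      have hb1 : -Real.log (1 - x) ≤ Real.log 2 := by
        have : Real.log 2⁻¹ ≤ Real.log (1 - x) :=
          Real.log_le_log (by norm_num) (by linarith)
        rw [Real.log_inv] at this
        linarith
      have hb2 : (1 - x)⁻¹ ≤ 2 := by
        rw [inv_le_comm₀ h3 (by norm_num)]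
        linarith
      have hlog2pos : (0:ℝ) ≤ Real.log 2 := Real.log_nonneg (by norm_num)
      calc (-Real.log (1 - x)) ^ k / (1 - x) * (-Real.log x) ^ l
          = ((-Real.log (1 - x)) ^ k * (1 - x)⁻¹) * (-Real.log x) ^ l := by
            rw [div_eq_mul_inv]
        _ ≤ (Real.log 2 ^ k * 2) * (-Real.log x) ^ l := by
            gcongr
            
        _ = (2 * Real.log 2 ^ k) * (-Real.log x) ^ l := by ring
  · -- near 1
    refine Integrable.mono' (g := fun x : ℝ => 2 ^ l * (-Real.log (1 - x)) ^ k) ?_ ?_ ?_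
    · -- integrability of reflected log power
      have himg : (fun u : ℝ => 1 - u) '' (Ioo (2⁻¹:ℝ) 1) = Ioo (0:ℝ) 2⁻¹ := by
        rw [Set.image_const_sub_Ioo]
        norm_num
      have hiff := MeasureTheory.integrableOn_image_iff_integrableOn_abs_deriv_smul
        (measurableSet_Ioo (a := (2⁻¹:ℝ)) (b := 1))
        (f := fun u : ℝ => 1 - u) (f' := fun _ => (-1:ℝ))
        (fun u _ => ((hasDerivAt_id u).const_sub 1).hasDerivWithinAt)
        (fun a _ b _ h => by dsimp at h; linarith)
        (fun x : ℝ => (-Real.log x) ^ k)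
      rw [himg] at hiff
      have hbase : IntegrableOn (fun x : ℝ => (-Real.log x) ^ k) (Ioo (0:ℝ) 2⁻¹) := by
        have := (moment_integrableOn 1 k one_pos).mono_set
          (show Ioo (0:ℝ) 2⁻¹ ⊆ Ioo 0 1 by
            intro x hx; exact ⟨hx.1, lt_trans hx.2 (by norm_num)⟩)
        simpa using this
      have := hiff.mp hbase
      simp only [abs_neg, abs_one, one_smul] at this
      exact (this.const_mul (2 ^ l : ℝ))
    · exact ((meas_integrand k l).aestronglyMeasurable).restrict
    · filter_upwards [ae_restrict_mem measurableSet_Ioo] with x hx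
      have hx1 : (2⁻¹:ℝ) < x := hx.1
      have hx2 : x < 1 := hx.2
      have hx0 : (0:ℝ) < x := lt_trans (by norm_num) hx1
      have h3 : (0:ℝ) < 1 - x := by linarith
      have hxIoo : x ∈ Ioo (0:ℝ) 1 := ⟨hx0, hx2⟩
      rw [Real.norm_of_nonneg (integrand_nonneg k l hxIoo)]
      have hlogx : 0 ≤ -Real.log x := neg_nonneg.2 (Real.log_nonpos hx0.le hx2.le)
      have hlog1x : 0 ≤ -Real.log (1 - x) :=
        neg_nonneg.2 (Real.log_nonpos h3.le (by linarith))
      -- -log x ≤ (1-x)/x ≤ 2 (1-x)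
      have hkey : -Real.log x ≤ 2 * (1 - x) := by
        have h := Real.log_le_sub_one_of_pos (inv_pos.mpr hx0)
        rw [Real.log_inv] at h
        have hxinv : x⁻¹ ≤ 2 := by
          rw [inv_le_comm₀ hx0 (by norm_num : (0:ℝ) < 2)]
          linarith
        have hid : x⁻¹ - 1 = (1 - x) * x⁻¹ := by field_simp
        have hinv : (1 - x) * x⁻¹ ≤ (1 - x) * 2 := mul_le_mul_of_nonneg_left hxinv h3.le
        linarith
      have hstep : (-Real.log x) ^ l / (1 - x) ≤ 2 ^ l := by
        have h1 : (-Real.log x) ^ l ≤ (2 * (1 - x)) ^ l := pow_le_pow_left₀ hlogx hkey l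
        have h2 : (2 * (1 - x)) ^ l = 2 ^ l * (1 - x) ^ l := mul_pow 2 (1-x) l
        have h3' : (1 - x) ^ l / (1 - x) = (1 - x) ^ (l - 1) := by
          rw [show (1-x) ^ l = (1-x) ^ (l-1) * (1-x) by rw [← pow_succ, Nat.sub_add_cancel hl],
            mul_div_cancel_right₀ _ h3.ne']
        calc (-Real.log x) ^ l / (1 - x) ≤ 2 ^ l * (1 - x) ^ l / (1 - x) := by
              gcongr; rw [← h2]; exact h1
          _ = 2 ^ l * ((1 - x) ^ l / (1 - x)) := by ring
          _ = 2 ^ l * (1 - x) ^ (l - 1) := by rw [h3']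
          _ ≤ 2 ^ l * 1 := by
              gcongr
              exact pow_le_one₀ h3.le (by linarith)
          _ = 2 ^ l := mul_one _
      calc (-Real.log (1 - x)) ^ k / (1 - x) * (-Real.log x) ^ l
          = (-Real.log (1 - x)) ^ k * ((-Real.log x) ^ l / (1 - x)) := by ring
        _ ≤ (-Real.log (1 - x)) ^ k * 2 ^ l :=
            mul_le_mul_of_nonneg_left hstep (by positivity)
        _ = 2 ^ l * (-Real.log (1 - x)) ^ k := by ring
end main


theorem integral_log_pow_eq_mzv (k l : ℕ) (hl : 1 ≤ l) :
    (∫ x in (0:ℝ)..1, (-Real.log (1 - x)) ^ k / (1 - x) * (-Real.log x) ^ l) =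
      (k.factorial : ℝ) * (l.factorial : ℝ) * zetaOnes (l + 1) k := by
  -- notation
  set G : ℝ → ℝ := fun x => (-Real.log (1 - x)) ^ k / (1 - x) * (-Real.log x) ^ l with hG
  set t : MzE k → ℝ :=
    fun v => ∏ i : Fin (k+1), (1 : ℝ) / (v.1 i : ℝ) ^ (if i = 0 then l + 1 else 1) with ht
  set c : MzE k → ℝ := fun v => (k.factorial : ℝ) * (l.factorial : ℝ) * t v with hc
  have hv0pos : ∀ v : MzE k, (0:ℝ) < (v.1 0 : ℝ) := fun v => by exact_mod_cast v.2.2 0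
  -- t v in product form
  have htv : ∀ v : MzE k, t v = 1 / (v.1 0 : ℝ) ^ (l+1) * (1 / mzP k v) := by
    intro v
    simp only [ht]
    rw [Fin.prod_univ_succ]
    simp only [if_pos rfl]
    congr 1
    rw [mzP]
    calc (∏ i : Fin k, 1 / ((v.1 i.succ : ℕ):ℝ) ^ (if i.succ = (0 : Fin (k+1)) then l + 1 else 1))
        = ∏ i : Fin k, 1 / (v.1 i.succ : ℝ) :=
          Finset.prod_congr rfl fun i _ => by rw [if_neg (Fin.succ_ne_zero i), pow_one]
      _ = 1 / ∏ i : Fin k, (v.1 i.succ : ℝ) := by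
          rw [Finset.prod_div_distrib, Finset.prod_const_one]
  have hcv : ∀ v : MzE k, c v
      = ((k.factorial : ℝ) / mzP k v) * ((l.factorial : ℝ) / (v.1 0 : ℝ) ^ (l+1)) := by
    intro v
    simp only [hc, htv v]
    ring
  have hcnn : ∀ v : MzE k, 0 ≤ c v := by
    intro v
    rw [hcv v]
    have := mzP_pos k v
    have := hv0pos v
    positivity
  -- the summand functions
  set F : MzE k → ℝ → ℝ :=
    fun v x => (k.factorial : ℝ) * (x ^ (v.1 0 - 1) / mzP k v) * (-Real.log x) ^ l with hF
  have hFmeas : ∀ v : MzE k, Measurable (F v) := by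
    intro v
    exact ((measurable_const.mul ((measurable_id.pow_const _).div_const _)).mul
      (Real.measurable_log.neg.pow_const l))
  have hFnn : ∀ (v : MzE k) {x : ℝ}, x ∈ Ioo (0:ℝ) 1 → 0 ≤ F v x := by
    intro v x hx
    have h1 : 0 ≤ -Real.log x := neg_nonneg.2 (Real.log_nonpos hx.1.le hx.2.le)
    have h2 := mzP_pos k v
    have h3 := hx.1
    rw [hF]
    positivity
  -- pointwise HasSum on Ioo 0 1
  have hptwise : ∀ x ∈ Ioo (0:ℝ) 1, HasSum (fun v => F v x) (G x) := by
    intro x hx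
    have h := (hasSum_logpow' k x hx.1.le hx.2).mul_left
      ((k.factorial : ℝ) * (-Real.log x) ^ l)
    have hkf : (k.factorial : ℝ) ≠ 0 := by positivity
    have h1x : (1:ℝ) - x ≠ 0 := by have := hx.2; intro h'; linarith [sub_eq_zero.mp h']
    have hval : ((k.factorial : ℝ) * (-Real.log x) ^ l)
        * ((-Real.log (1 - x)) ^ k / (k.factorial * (1 - x))) = G x := by
      rw [hG]
      field_simp
    have hfun : (fun v : MzE k => F v x)
        = fun v : MzE k => ((k.factorial : ℝ) * (-Real.log x) ^ l)
            * (x ^ (v.1 0 - 1) / mzP k v) := by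
      funext v
      simp only [hF]
      ring
    rw [hfun, ← hval]
    exact h
  -- integrability and values of each F v
  have hfe : ∀ v : MzE k, (fun x : ℝ =>
      ((k.factorial : ℝ) / mzP k v) * (x ^ (v.1 0 - 1) * (-Real.log x) ^ l)) = F v := by
    intro v
    funext x
    simp only [hF]
    ring
  have hFint : ∀ v : MzE k, IntegrableOn (F v) (Ioo (0:ℝ) 1) := by
    intro v
    have h := (moment_integrableOn (v.1 0) l (v.2.2 0)).const_mul
      ((k.factorial : ℝ) / mzP k v)
    rwa [hfe v] at h
  have hFval : ∀ v : MzE k, ∫ x in Ioo (0:ℝ) 1, F v x = c v := by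
    intro v
    rw [← hfe v, MeasureTheory.integral_const_mul, moment (v.1 0) l (v.2.2 0), hcv v]
  have haeF : ∀ v : MzE k, 0 ≤ᵐ[volume.restrict (Ioo (0:ℝ) 1)] F v := by
    intro v
    filter_upwards [ae_restrict_mem measurableSet_Ioo] with x hx
    exact hFnn v hx
  -- ENNReal identity
  have key : ENNReal.ofReal (∫ x in Ioo (0:ℝ) 1, G x) = ∑' v : MzE k, ENNReal.ofReal (c v) := by
    have haeG : 0 ≤ᵐ[volume.restrict (Ioo (0:ℝ) 1)] G := by
      filter_upwards [ae_restrict_mem measurableSet_Ioo] with x hx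
      exact integrand_nonneg k l hx
    rw [ofReal_integral_eq_lintegral_ofReal (integrable_integrand k l hl) haeG]
    have hcongr : ∫⁻ x in Ioo (0:ℝ) 1, ENNReal.ofReal (G x)
        = ∫⁻ x in Ioo (0:ℝ) 1, ∑' v : MzE k, ENNReal.ofReal (F v x) := by
      apply lintegral_congr_ae
      filter_upwards [ae_restrict_mem measurableSet_Ioo] with x hx
      rw [← (hptwise x hx).tsum_eq,
        ENNReal.ofReal_tsum_of_nonneg (fun v => hFnn v hx) (hptwise x hx).summable]
    rw [hcongr, lintegral_tsum (fun v => ((hFmeas v).ennreal_ofReal).aemeasurable)]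
    congr 1
    funext v
    rw [← ofReal_integral_eq_lintegral_ofReal (hFint v) (haeF v), hFval v]
  -- finiteness and summability
  have hfin : (∑' v : MzE k, ENNReal.ofReal (c v)) ≠ ⊤ := by
    rw [← key]
    exact ENNReal.ofReal_ne_top
  have hsummc : Summable c := by
    have h := ENNReal.summable_toReal hfin
    exact h.congr fun v => ENNReal.toReal_ofReal (hcnn v)
  have hIeq : ∫ x in Ioo (0:ℝ) 1, G x = ∑' v : MzE k, c v := by
    have h1 : ENNReal.ofReal (∫ x in Ioo (0:ℝ) 1, G x)
        = ENNReal.ofReal (∑' v : MzE k, c v) := by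
      rw [key, ← ENNReal.ofReal_tsum_of_nonneg hcnn hsummc]
    have hGnn : 0 ≤ ∫ x in Ioo (0:ℝ) 1, G x :=
      setIntegral_nonneg measurableSet_Ioo (fun x hx => integrand_nonneg k l hx)
    exact (ENNReal.ofReal_eq_ofReal_iff hGnn (tsum_nonneg hcnn)).mp h1
  -- finish
  rw [intervalIntegral.integral_of_le (by norm_num : (0:ℝ) ≤ 1),
    MeasureTheory.integral_Ioc_eq_integral_Ioo]
  have hzeta : zetaOnes (l + 1) k = ∑' v : MzE k, t v := rfl
  calc ∫ x in Ioo (0:ℝ) 1, G x = ∑' v : MzE k, c v := hIeq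
    _ = ∑' v : MzE k, ((k.factorial : ℝ) * (l.factorial : ℝ)) * t v := by
        refine tsum_congr fun v => ?_
        rw [hc]
    _ = ((k.factorial : ℝ) * (l.factorial : ℝ)) * ∑' v : MzE k, t v := tsum_mul_left
    _ = (k.factorial : ℝ) * (l.factorial : ℝ) * zetaOnes (l + 1) k := by rw [hzeta]
end

section
/- The integral I_0 = ∬_T (1/(xy)) dx dy over the triangle T with vertices (1,0), (0,1), (1,1) equals ζ(2). -/
open MeasureTheory Real Set

/-- The triangle with vertices (1,0), (0,1), (1,1). -/
def T : Set (ℝ × ℝ) := {p | 0 ≤ p.1 ∧ p.1 ≤ 1 ∧ 1 - p.1 ≤ p.2 ∧ p.2 ≤ 1}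

lemma T_meas : MeasurableSet T := by
  unfold T
  apply MeasurableSet.inter (measurableSet_le measurable_const measurable_fst)
  apply MeasurableSet.inter (measurableSet_le measurable_fst measurable_const)
  exact MeasurableSet.inter (measurableSet_le (measurable_const.sub measurable_fst) measurable_snd)
    (measurableSet_le measurable_snd measurable_const)

lemma inner_int {x : ℝ} (hx : x ∈ Ioo (0:ℝ) 1) :
    ∫⁻ y in Icc (1-x) 1, ENNReal.ofReal (1/(x*y)) = ENNReal.ofReal (-Real.log (1-x) / x) := by
  obtain ⟨hx0, hx1⟩ := hx
  have h1x : (0:ℝ) < 1 - x := by linarith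
  have hcont : ContinuousOn (fun y : ℝ => 1/(x*y)) (Icc (1-x) 1) := by
    apply ContinuousOn.div continuousOn_const (continuousOn_const.mul continuousOn_id)
    intro y hy
    have : 0 < y := lt_of_lt_of_le h1x hy.1
    exact mul_ne_zero hx0.ne' this.ne'
  have hint : IntegrableOn (fun y : ℝ => 1/(x*y)) (Icc (1-x) 1) := hcont.integrableOn_Icc
  rw [← ofReal_integral_eq_lintegral_ofReal hint]
  · congr 1
    rw [integral_Icc_eq_integral_Ioc, ← intervalIntegral.integral_of_le (by linarith : 1 - x ≤ 1)]
    have heq : ∀ y : ℝ, 1/(x*y) = x⁻¹ * y⁻¹ := fun y => by rw [one_div, mul_inv]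
    simp_rw [heq]
    have hinv : ∫ y in (1-x)..1, y⁻¹ = log (1 / (1-x)) :=
      integral_inv (by rw [uIcc_of_le (by linarith)]; intro h; exact absurd h.1 (by linarith))
    rw [intervalIntegral.integral_const_mul, hinv, one_div, Real.log_inv]
    ring
  · filter_upwards [self_mem_ae_restrict measurableSet_Icc] with y hy
    have : 0 < y := lt_of_lt_of_le h1x hy.1
    positivity

lemma series_eq {x : ℝ} (hx : x ∈ Ioo (0:ℝ) 1) :
    ENNReal.ofReal (-Real.log (1-x) / x) = ∑' n : ℕ, ENNReal.ofReal (x^n / (n+1)) := by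
  obtain ⟨hx0, hx1⟩ := hx
  have habs : |x| < 1 := by rw [abs_of_pos hx0]; exact hx1
  have hs : HasSum (fun n : ℕ => x ^ (n+1) / (n+1)) (-Real.log (1-x)) :=
    Real.hasSum_pow_div_log_of_abs_lt_one habs
  have hs2 : HasSum (fun n : ℕ => x ^ n / (n+1)) (-Real.log (1-x) / x) := by
    have := hs.div_const x
    convert this using 2 with n
    · rfl
    rw [pow_succ]
    field_simp
  rw [← hs2.tsum_eq]
  exact ENNReal.ofReal_tsum_of_nonneg (fun n => by positivity) hs2.summable

lemma term_int (n : ℕ) :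
    ∫⁻ x in Ioo (0:ℝ) 1, ENNReal.ofReal (x^n / (n+1)) = ENNReal.ofReal (1/((n:ℝ)+1)^2) := by
  have hint : IntegrableOn (fun x : ℝ => x^n / ((n:ℝ)+1)) (Ioo 0 1) :=
    (((continuous_pow n).div_const _).continuousOn.integrableOn_Icc).mono_set Ioo_subset_Icc_self
  rw [← ofReal_integral_eq_lintegral_ofReal hint (by
    filter_upwards [self_mem_ae_restrict measurableSet_Ioo] with y hy
    have h0 : 0 < y := hy.1
    positivity)]
  congr 1
  rw [← integral_Ioc_eq_integral_Ioo, ← intervalIntegral.integral_of_le (by norm_num : (0:ℝ) ≤ 1),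
    intervalIntegral.integral_div, integral_pow]
  have h : ((n:ℝ)+1) ≠ 0 := by positivity
  field_simp
  ring

lemma sum_eq : ∑' n : ℕ, ENNReal.ofReal (1/((n:ℝ)+1)^2) = ENNReal.ofReal (π^2/6) := by
  have hs : HasSum (fun n : ℕ => (1:ℝ) / (n:ℝ)^2) (π^2/6) := hasSum_zeta_two
  have hs1 : HasSum (fun n : ℕ => (1:ℝ) / ((n:ℝ)+1)^2) (π^2/6) := by
    have h := (hasSum_nat_add_iff (f := fun n : ℕ => (1:ℝ)/(n:ℝ)^2) 1).mpr (by simpa using hs)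
    convert h using 2 with n
    · rfl
    push_cast
    ring
  rw [← hs1.tsum_eq]
  exact (ENNReal.ofReal_tsum_of_nonneg (fun n => by positivity) hs1.summable).symm

lemma lint_T : ∫⁻ p in T, ENNReal.ofReal (1/(p.1*p.2)) = ENNReal.ofReal (π^2/6) := by
  have hmeas : Measurable fun p : ℝ×ℝ => ENNReal.ofReal (1/(p.1*p.2)) :=
    (measurable_const.div (measurable_fst.mul measurable_snd)).ennreal_ofReal
  rw [← lintegral_indicator T_meas _, Measure.volume_eq_prod,
    lintegral_prod _ (hmeas.indicator T_meas).aemeasurable]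
  have hslice : ∀ x : ℝ, (∫⁻ y, T.indicator (fun p : ℝ×ℝ => ENNReal.ofReal (1/(p.1*p.2))) (x, y))
      = (Icc (0:ℝ) 1).indicator (fun x => ∫⁻ y in Icc (1-x) 1, ENNReal.ofReal (1/(x*y))) x := by
    intro x
    by_cases hx : x ∈ Icc (0:ℝ) 1
    · rw [indicator_of_mem hx, ← lintegral_indicator measurableSet_Icc _]
      congr 1
      funext y
      by_cases hy : y ∈ Icc (1-x) 1
      · rw [indicator_of_mem hy, indicator_of_mem]
        exact ⟨hx.1, hx.2, hy.1, hy.2⟩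
      · rw [indicator_of_notMem hy, indicator_of_notMem]
        intro h; exact hy ⟨h.2.2.1, h.2.2.2⟩
    · rw [indicator_of_notMem hx]
      have h0 : ∀ y : ℝ, T.indicator (fun p : ℝ×ℝ => ENNReal.ofReal (1/(p.1*p.2))) (x, y) = 0 := by
        intro y
        apply indicator_of_notMem
        intro h; exact hx ⟨h.1, h.2.1⟩
      simp only [h0, lintegral_zero]
  simp_rw [hslice]
  rw [lintegral_indicator measurableSet_Icc _,
      ← Measure.restrict_congr_set Ioo_ae_eq_Icc,
      lintegral_congr_ae (ae_restrict_of_forall_mem measurableSet_Ioo fun x hx =>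
        (inner_int hx).trans (series_eq hx)),
      lintegral_tsum (fun n => Measurable.aemeasurable (by measurability))]
  simp_rw [term_int]
  exact sum_eq

theorem integral_triangle_zero : ((∫ p in T, 1 / (p.1 * p.2) : ℝ) : ℂ) = riemannZeta 2 := by
  have h1 : (∫ p in T, 1 / (p.1 * p.2) : ℝ) = π^2/6 := by
    rw [integral_eq_lintegral_of_nonneg_ae ?_ ?_]
    · rw [lint_T]; exact ENNReal.toReal_ofReal (by positivity)
    · filter_upwards [ae_restrict_mem T_meas] with p hp
      simp only [T, mem_setOf_eq] at hp
      have h1 : 0 ≤ p.1 := hp.1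
      have h2 : 0 ≤ p.2 := le_trans (by linarith [hp.2.1] : (0:ℝ) ≤ 1 - p.1) hp.2.2.1
      positivity
    · exact (measurable_const.div (measurable_fst.mul measurable_snd)).aestronglyMeasurable
  rw [h1, riemannZeta_two]
  push_cast
  ring
end

section
/- For all integers n ≥ 0 and 0 ≤ k ≤ n, the duality ζ(n−k+2, 1,…,1) = ζ(k+2, 1,…,1) holds, where the left multiple zeta value has k trailing ones and the right one has n−k trailing ones. -/
open scoped ENNReal
open Filter

noncomputable def Eb : ℕ → ℕ → ℝ≥0∞
  | 0, _ => 1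
  | (k+1), c => ∑ j ∈ Finset.Ioo 0 c, ((j : ℝ≥0∞))⁻¹ * Eb k j

def TupB (k c : ℕ) : Type := {f : Fin k → ℕ // StrictAnti f ∧ ∀ i, 0 < f i ∧ f i < c}
def Tup (k : ℕ) : Type := {f : Fin k → ℕ // StrictAnti f ∧ ∀ i, 0 < f i}

lemma strictAnti_cons {k n : ℕ} {g : Fin k → ℕ} (hg : StrictAnti g)
    (hn : ∀ i, g i < n) : StrictAnti (Fin.cons n g : Fin (k+1) → ℕ) := by
  intro i j hij
  induction i using Fin.cases with
  | zero =>
    induction j using Fin.cases with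
    | zero => exact absurd hij (lt_irrefl _)
    | succ j => simpa using hn j
  | succ i =>
    induction j using Fin.cases with
    | zero => exact absurd hij (by simp [Fin.lt_def])
    | succ j => simpa using hg (by simpa using hij)

def tupBEquiv (k c : ℕ) :
    TupB (k+1) c ≃ Σ n : {n : ℕ // n ∈ Finset.Ioo 0 c}, TupB k n.1 where
  toFun v := ⟨⟨v.1 0, by
      rcases v.2.2 0 with ⟨h1, h2⟩; simpa [Finset.mem_Ioo] using ⟨h1, h2⟩⟩,
    ⟨fun i => v.1 i.succ, by
      refine ⟨fun i j hij => v.2.1 (by simpa using hij), fun i => ⟨(v.2.2 i.succ).1, ?_⟩⟩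
      exact v.2.1 (Fin.succ_pos i)⟩⟩
  invFun p := ⟨Fin.cons p.1.1 p.2.1, by
    have hm := Finset.mem_Ioo.mp p.1.2
    refine ⟨strictAnti_cons p.2.2.1 (fun i => (p.2.2.2 i).2), fun i => ?_⟩
    induction i using Fin.cases with
    | zero => exact ⟨hm.1, hm.2⟩
    | succ i => exact ⟨(p.2.2.2 i).1, lt_trans (p.2.2.2 i).2 hm.2⟩⟩
  left_inv v := by
    apply Subtype.ext
    exact Fin.cons_self_tail v.1
  right_inv p := by
    rcases p with ⟨n, g⟩
    apply Sigma.ext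
    · exact Subtype.ext rfl
    · apply heq_of_eq
      apply Subtype.ext
      funext i
      simp

def tupEquiv (k : ℕ) :
    Tup (k+1) ≃ Σ n : {n : ℕ // 0 < n}, TupB k n.1 where
  toFun v := ⟨⟨v.1 0, v.2.2 0⟩,
    ⟨fun i => v.1 i.succ, by
      refine ⟨fun i j hij => v.2.1 (by simpa using hij), fun i => ⟨v.2.2 i.succ, ?_⟩⟩
      exact v.2.1 (Fin.succ_pos i)⟩⟩
  invFun p := ⟨Fin.cons p.1.1 p.2.1, by
    refine ⟨strictAnti_cons p.2.2.1 (fun i => (p.2.2.2 i).2), fun i => ?_⟩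
    induction i using Fin.cases with
    | zero => exact p.1.2
    | succ i => exact (p.2.2.2 i).1⟩
  left_inv v := by
    apply Subtype.ext
    exact Fin.cons_self_tail v.1
  right_inv p := by
    rcases p with ⟨n, g⟩
    apply Sigma.ext
    · exact Subtype.ext rfl
    · apply heq_of_eq
      apply Subtype.ext
      funext i
      simp

instance uniqueTupB0 (c : ℕ) : Unique (TupB 0 c) where
  default := ⟨Fin.elim0, by
    refine ⟨fun i j hij => i.elim0, fun i => i.elim0⟩⟩
  uniq v := by
    apply Subtype.ext
    funext i
    exact i.elim0

lemma tsum_tupB (k : ℕ) : ∀ c : ℕ,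
    (∑' v : TupB k c, ∏ i, ((v.1 i : ℝ≥0∞))⁻¹) = Eb k c := by
  induction k with
  | zero =>
    intro c
    rw [tsum_eq_single (default : TupB 0 c) (fun b hb => absurd (Subsingleton.elim b default) hb)]
    simp [Eb]
  | succ k ih =>
    intro c
    rw [← Equiv.tsum_eq (tupBEquiv k c).symm, ENNReal.tsum_sigma']
    have : ∀ (n : {n : ℕ // n ∈ Finset.Ioo 0 c}) (g : TupB k n.1),
        (∏ i, ((((tupBEquiv k c).symm ⟨n, g⟩).1 i : ℝ≥0∞))⁻¹) =
          ((n.1 : ℝ≥0∞))⁻¹ * ∏ i, ((g.1 i : ℝ≥0∞))⁻¹ := by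
      intro n g
      rw [show ((tupBEquiv k c).symm ⟨n, g⟩).1 = Fin.cons n.1 g.1 from rfl,
        Fin.prod_univ_succ]
      simp
    calc ∑' (n : {n : ℕ // n ∈ Finset.Ioo 0 c}), ∑' (g : TupB k n.1),
          ∏ i, ((((tupBEquiv k c).symm ⟨n, g⟩).1 i : ℝ≥0∞))⁻¹
        = ∑' (n : {n : ℕ // n ∈ Finset.Ioo 0 c}), ((n.1 : ℝ≥0∞))⁻¹ * Eb k n.1 := by
          refine tsum_congr fun n => ?_
          rw [tsum_congr (this n), ENNReal.tsum_mul_left, ih]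
      _ = ∑ j ∈ Finset.Ioo 0 c, ((j : ℝ≥0∞))⁻¹ * Eb k j :=
          Finset.tsum_subtype (Finset.Ioo 0 c) (fun j => ((j : ℝ≥0∞))⁻¹ * Eb k j)
      _ = Eb (k+1) c := rfl

noncomputable def Zenn (M K : ℕ) : ℝ≥0∞ :=
  ∑' v : Tup (K+1), ∏ i, ((1:ℝ≥0∞) / ((v.1 i : ℝ≥0∞)) ^ (if i = 0 then M else 1))

lemma Zenn_eq (M K : ℕ) :
    Zenn M K = ∑' n : {n : ℕ // 0 < n}, ((n.1 : ℝ≥0∞))⁻¹ ^ M * Eb K n.1 := by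
  rw [Zenn, ← Equiv.tsum_eq (tupEquiv K).symm, ENNReal.tsum_sigma']
  refine tsum_congr fun n => ?_
  have : ∀ g : TupB K n.1,
      (∏ i, ((1:ℝ≥0∞) / ((((tupEquiv K).symm ⟨n, g⟩).1 i : ℝ≥0∞)) ^ (if i = 0 then M else 1))) =
        ((n.1 : ℝ≥0∞))⁻¹ ^ M * ∏ i, ((g.1 i : ℝ≥0∞))⁻¹ := by
    intro g
    rw [show ((tupEquiv K).symm ⟨n, g⟩).1 = Fin.cons n.1 g.1 from rfl, Fin.prod_univ_succ]
    simp [Fin.succ_ne_zero, one_div, ENNReal.inv_pow]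
  rw [tsum_congr this, ENNReal.tsum_mul_left, tsum_tupB]

-- partial sum identity

lemma partial_tel (b c : ℕ) (hb : 0 < b) : ∀ N : ℕ,
    (∑ i ∈ Finset.range N, ((c + i).factorial : ℝ) / ((c + 1 + i + b).factorial))
      = (c.factorial : ℝ) / (b * (c + b).factorial)
        - ((c + N).factorial : ℝ) / (b * (c + N + b).factorial) := by
  intro N
  induction N with
  | zero => simp
  | succ N ih =>
    rw [Finset.sum_range_succ, ih]
    have h1 : (c + N + b + 1 : ℕ).factorial = ((c + N + b) + 1) * (c + N + b).factorial :=
      Nat.factorial_succ _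
    have h2 : (c + (N+1) : ℕ).factorial = ((c + N) + 1) * (c + N).factorial := by
      rw [show c + (N+1) = (c + N) + 1 by ring, Nat.factorial_succ]
    have h3 : (c + (N+1) + b : ℕ) = (c + N + b) + 1 := by ring
    have hf1 : ((c + N + b).factorial : ℝ) ≠ 0 := Nat.cast_ne_zero.mpr (Nat.factorial_ne_zero _)
    have hf2 : (((c + N + b) + 1 : ℕ).factorial : ℝ) ≠ 0 :=
      Nat.cast_ne_zero.mpr (Nat.factorial_ne_zero _)
    have hbr : (b : ℝ) ≠ 0 := Nat.cast_ne_zero.mpr hb.ne'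
    rw [h3]
    have e1 : ((c + 1 + N + b : ℕ) : ℕ) = (c + N + b) + 1 := by ring
    rw [e1]
    rw [show ((c + N + b) + 1 : ℕ).factorial = ((c + N + b) + 1) * (c + N + b).factorial from
      Nat.factorial_succ _, h2]
    push_cast
    field_simp
    ring

lemma real_hasSum (b c : ℕ) (hb : 0 < b) :
    HasSum (fun i : ℕ => ((c + i).factorial : ℝ) / ((c + 1 + i + b).factorial))
      ((c.factorial : ℝ) / (b * (c + b).factorial)) := by
  have hnn : ∀ i : ℕ, 0 ≤ ((c + i).factorial : ℝ) / ((c + 1 + i + b).factorial) :=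
    fun i => div_nonneg (Nat.cast_nonneg _) (Nat.cast_nonneg _)
  rw [hasSum_iff_tendsto_nat_of_nonneg hnn]
  rw [show ((c.factorial : ℝ) / (b * (c + b).factorial))
      = (c.factorial : ℝ) / (b * (c + b).factorial) - 0 by ring]
  have htend : Tendsto (fun N : ℕ => ((c + N).factorial : ℝ) / (b * (c + N + b).factorial))
      atTop (nhds 0) := by
    have hle : ∀ N : ℕ, ((c + N).factorial : ℝ) / (b * (c + N + b).factorial)
        ≤ 1 / (b * (c + N + 1)) := by
      intro N
      have h1 : ((c + N) + 1).factorial ≤ (c + N + b).factorial :=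
        Nat.factorial_le (by omega)
      have h2 : ((c+N).factorial : ℝ) * ((c + N) + 1) ≤ ((c + N + b).factorial : ℝ) := by
        have := Nat.factorial_succ (c + N)
        calc ((c+N).factorial : ℝ) * ((c + N) + 1) = (((c+N)+1).factorial : ℝ) := by
              rw [Nat.factorial_succ]; push_cast; ring
          _ ≤ _ := Nat.cast_le.mpr h1
      rw [div_le_div_iff₀ (by positivity) (by positivity)]
      calc ((c + N).factorial : ℝ) * (b * (c + N + 1))
          = (b : ℝ) * (((c+N).factorial : ℝ) * ((c + N) + 1)) := by ring
        _ ≤ (b : ℝ) * ((c + N + b).factorial : ℝ) := by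
            apply mul_le_mul_of_nonneg_left _ (Nat.cast_nonneg _)
            exact h2
        _ = 1 * ((b:ℝ) * (c + N + b).factorial) := by ring
    have h0 : Tendsto (fun N : ℕ => 1 / ((b:ℝ) * (c + N + 1))) atTop (nhds 0) := by
      simp only [one_div]
      apply Tendsto.comp tendsto_inv_atTop_zero
      apply Tendsto.const_mul_atTop (by positivity : (0:ℝ) < b)
      apply tendsto_atTop_add_const_right
      apply tendsto_atTop_add_const_left
      exact tendsto_natCast_atTop_atTop
    refine squeeze_zero (fun N => by positivity) hle (by simpa [one_div] using h0)
  have := (tendsto_const_nhds (x := (c.factorial : ℝ) / (b * (c + b).factorial))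
      (f := atTop (α := ℕ))).sub htend
  refine this.congr fun N => (partial_tel b c hb N).symm


lemma key (b c : ℕ) (hb : 0 < b) :
    (∑' a : ℕ, if c < a then ((a-1).factorial : ℝ≥0∞) / ((a + b).factorial) else 0)
      = (c.factorial : ℝ≥0∞) / ((b : ℝ≥0∞) * ((c + b).factorial : ℝ≥0∞)) := by
  set F : ℕ → ℝ := fun a => if c < a then ((a-1).factorial : ℝ) / ((a + b).factorial) else 0
    with hF
  have hg : Function.Injective (fun i : ℕ => c + 1 + i) := by
    intro x y h
    simp only at h
    omega
  have hcomp : (F ∘ fun i : ℕ => c + 1 + i)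
      = fun i : ℕ => ((c + i).factorial : ℝ) / ((c + 1 + i + b).factorial) := by
    funext i
    simp only [hF, Function.comp_apply, if_pos (by omega : c < c + 1 + i)]
    have h : c + 1 + i - 1 = c + i := by omega
    rw [h]
  have hFs : HasSum F ((c.factorial : ℝ) / (b * (c + b).factorial)) := by
    rw [← hg.hasSum_iff (by
      intro x hx
      simp only [hF]
      rw [if_neg]
      intro hcx
      exact hx ⟨x - (c+1), by simp only []; omega⟩)]
    rw [hcomp]
    exact real_hasSum b c hb
  have hnn : ∀ a, 0 ≤ F a := by
    intro a
    simp only [hF]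
    split
    · positivity
    · exact le_refl 0
  have h1 : ENNReal.ofReal (∑' a, F a) = ∑' a, ENNReal.ofReal (F a) :=
    ENNReal.ofReal_tsum_of_nonneg hnn hFs.summable
  rw [hFs.tsum_eq] at h1
  have h2 : ∀ a : ℕ, ENNReal.ofReal (F a)
      = if c < a then ((a-1).factorial : ℝ≥0∞) / ((a + b).factorial) else 0 := by
    intro a
    simp only [hF]
    split
    · rw [ENNReal.ofReal_div_of_pos (by positivity)]
      norm_cast
    · exact ENNReal.ofReal_zero
  rw [tsum_congr h2] at h1
  rw [← h1, ENNReal.ofReal_div_of_pos (by positivity), ENNReal.ofReal_natCast,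
    ENNReal.ofReal_mul (Nat.cast_nonneg _), ENNReal.ofReal_natCast, ENNReal.ofReal_natCast]

lemma fact_ne_top (n : ℕ) : ((n.factorial : ℝ≥0∞)) ≠ ⊤ := ENNReal.natCast_ne_top _
lemma fact_ne_zero' (n : ℕ) : ((n.factorial : ℝ≥0∞)) ≠ 0 :=
  Nat.cast_ne_zero.mpr (Nat.factorial_ne_zero _)

lemma scalar1 (b x : ℕ) (hb : 0 < b) (hx : 0 < x) :
    ((x.factorial : ℝ≥0∞) / ((b : ℝ≥0∞) * ((x + b).factorial : ℝ≥0∞))) * ((x : ℝ≥0∞))⁻¹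
      = ((b : ℝ≥0∞))⁻¹ * (((x-1).factorial : ℝ≥0∞) / (((x + b).factorial : ℝ≥0∞))) := by
  have hbne : (b : ℝ≥0∞) ≠ 0 := Nat.cast_ne_zero.mpr hb.ne'
  have hxne : (x : ℝ≥0∞) ≠ 0 := Nat.cast_ne_zero.mpr hx.ne'
  have hden : (b : ℝ≥0∞) * ((x + b).factorial : ℝ≥0∞) ≠ 0 :=
    mul_ne_zero hbne (fact_ne_zero' _)
  have h1 : ((x.factorial : ℝ≥0∞) / ((b : ℝ≥0∞) * ((x + b).factorial))) * ((x : ℝ≥0∞))⁻¹ ≠ ⊤ := by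
    apply ENNReal.mul_ne_top
    · exact (ENNReal.div_lt_top (fact_ne_top _) hden).ne
    · exact ENNReal.inv_ne_top.mpr hxne
  have h2 : ((b : ℝ≥0∞))⁻¹ * (((x-1).factorial : ℝ≥0∞) / (((x + b).factorial : ℝ≥0∞))) ≠ ⊤ := by
    apply ENNReal.mul_ne_top
    · exact ENNReal.inv_ne_top.mpr hbne
    · exact (ENNReal.div_lt_top (fact_ne_top _) (fact_ne_zero' _)).ne
  rw [← ENNReal.toReal_eq_toReal_iff' h1 h2]
  rw [ENNReal.toReal_mul, ENNReal.toReal_mul, ENNReal.toReal_div, ENNReal.toReal_div,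
    ENNReal.toReal_inv, ENNReal.toReal_inv, ENNReal.toReal_mul]
  simp only [ENNReal.toReal_natCast]
  have hfx : (x.factorial : ℝ) = x * (x-1).factorial := by
    conv_lhs => rw [show x = (x-1) + 1 by omega]
    rw [Nat.factorial_succ]
    push_cast [show (x-1 : ℕ) + 1 = x by omega]
    ring
  rw [hfx]
  have h3 : ((x+b).factorial : ℝ) ≠ 0 := Nat.cast_ne_zero.mpr (Nat.factorial_ne_zero _)
  have h4 : (b : ℝ) ≠ 0 := Nat.cast_ne_zero.mpr hb.ne'
  have h5 : (x : ℝ) ≠ 0 := Nat.cast_ne_zero.mpr hx.ne'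
  field_simp

lemma claim1 (b : ℕ) (hb : 0 < b) : ∀ j : ℕ,
    (∑' a : ℕ, if 0 < a then ((a-1).factorial : ℝ≥0∞) / (((a + b).factorial : ℝ≥0∞)) * Eb j a
      else 0)
      = (((b : ℝ≥0∞)) ^ (j+1) * (b.factorial : ℝ≥0∞))⁻¹ := by
  have hbne : (b : ℝ≥0∞) ≠ 0 := Nat.cast_ne_zero.mpr hb.ne'
  have hbnt : (b : ℝ≥0∞) ≠ ⊤ := ENNReal.natCast_ne_top _
  intro j
  induction j with
  | zero =>
    have h0 : ∀ a : ℕ,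
        (if 0 < a then ((a-1).factorial : ℝ≥0∞) / (((a + b).factorial : ℝ≥0∞)) * Eb 0 a else 0)
        = (if 0 < a then ((a-1).factorial : ℝ≥0∞) / (((a + b).factorial : ℝ≥0∞)) else 0) := by
      intro a
      simp [Eb]
    rw [tsum_congr h0, key b 0 hb]
    simp only [Nat.factorial_zero, Nat.cast_one, zero_add, pow_one]
    rw [one_div]
  | succ j ih =>
    -- double sum manipulation
    set w : ℕ → ℝ≥0∞ := fun a => ((a-1).factorial : ℝ≥0∞) / (((a + b).factorial : ℝ≥0∞)) with hw
    set T : ℕ → ℕ → ℝ≥0∞ := fun a x =>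
      if 0 < x ∧ x < a then w a * (((x : ℝ≥0∞))⁻¹ * Eb j x) else 0 with hT
    have hterm : ∀ a : ℕ, (if 0 < a then w a * Eb (j+1) a else 0) = ∑' x : ℕ, T a x := by
      intro a
      by_cases ha : 0 < a
      · rw [if_pos ha]
        have : Eb (j+1) a = ∑ x ∈ Finset.Ioo 0 a, ((x : ℝ≥0∞))⁻¹ * Eb j x := rfl
        rw [this, Finset.mul_sum]
        rw [show (∑' x : ℕ, T a x) = ∑ x ∈ Finset.Ioo 0 a, T a x from
          tsum_eq_sum (fun x hx => by
            simp only [hT]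
            rw [if_neg]
            intro hcon
            exact hx (Finset.mem_Ioo.mpr hcon))]
        refine Finset.sum_congr rfl fun x hx => ?_
        simp only [hT]
        rw [if_pos (Finset.mem_Ioo.mp hx)]
      · rw [if_neg ha]
        symm
        have : ∀ x : ℕ, T a x = 0 := by
          intro x
          simp only [hT]
          rw [if_neg (by omega)]
        rw [tsum_congr this, tsum_zero]
    rw [tsum_congr hterm, ENNReal.tsum_comm]
    -- inner sum over a
    have hinner : ∀ x : ℕ, (∑' a : ℕ, T a x)
        = if 0 < x then ((b : ℝ≥0∞))⁻¹
            * (((x-1).factorial : ℝ≥0∞) / (((x + b).factorial : ℝ≥0∞)) * Eb j x) else 0 := by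
      intro x
      by_cases hx : 0 < x
      · rw [if_pos hx]
        have h1 : ∀ a : ℕ, T a x
            = (if x < a then w a else 0) * (((x : ℝ≥0∞))⁻¹ * Eb j x) := by
          intro a
          simp only [hT]
          by_cases hxa : x < a
          · rw [if_pos ⟨hx, hxa⟩, if_pos hxa]
          · rw [if_neg (by tauto), if_neg hxa, zero_mul]
        rw [tsum_congr h1, ENNReal.tsum_mul_right, hw]
        rw [key b x hb]
        calc (x.factorial : ℝ≥0∞) / ((b:ℝ≥0∞) * ((x+b).factorial : ℝ≥0∞))
              * (((x:ℝ≥0∞))⁻¹ * Eb j x)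
            = ((x.factorial : ℝ≥0∞) / ((b:ℝ≥0∞) * ((x+b).factorial : ℝ≥0∞))
              * ((x:ℝ≥0∞))⁻¹) * Eb j x := by ring
          _ = (((b : ℝ≥0∞))⁻¹
              * (((x-1).factorial : ℝ≥0∞) / (((x + b).factorial : ℝ≥0∞)))) * Eb j x := by
                rw [scalar1 b x hb hx]
          _ = ((b : ℝ≥0∞))⁻¹
              * (((x-1).factorial : ℝ≥0∞) / (((x + b).factorial : ℝ≥0∞)) * Eb j x) := by ring
      · rw [if_neg hx]
        have : ∀ a : ℕ, T a x = 0 := by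
          intro a
          simp only [hT]
          rw [if_neg (by omega)]
        rw [tsum_congr this, tsum_zero]
    rw [tsum_congr hinner]
    have hfin : ∀ x : ℕ,
        (if 0 < x then ((b : ℝ≥0∞))⁻¹
            * (((x-1).factorial : ℝ≥0∞) / (((x + b).factorial : ℝ≥0∞)) * Eb j x) else 0)
        = ((b : ℝ≥0∞))⁻¹
            * (if 0 < x then ((x-1).factorial : ℝ≥0∞) / (((x + b).factorial : ℝ≥0∞)) * Eb j x
              else 0) := by
      intro x
      by_cases hx : 0 < x
      · rw [if_pos hx, if_pos hx]
      · rw [if_neg hx, if_neg hx, mul_zero]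
    rw [tsum_congr hfin, ENNReal.tsum_mul_left, ih]
    rw [← ENNReal.mul_inv (Or.inl hbne) (Or.inl hbnt)]
    congr 1
    rw [← mul_assoc, ← pow_succ']

lemma scalar2 (m n : ℕ) (hn : 0 < n) :
    ((n : ℝ≥0∞))⁻¹ ^ (m+2)
      = (((n-1).factorial : ℝ≥0∞)) * (((n : ℝ≥0∞)) ^ (m+1) * (n.factorial : ℝ≥0∞))⁻¹ := by
  have hne : (n : ℝ≥0∞) ≠ 0 := Nat.cast_ne_zero.mpr hn.ne'
  have hnt : (n : ℝ≥0∞) ≠ ⊤ := ENNReal.natCast_ne_top _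
  have h1 : ((n : ℝ≥0∞))⁻¹ ^ (m+2) ≠ ⊤ := by
    apply ENNReal.pow_ne_top
    exact ENNReal.inv_ne_top.mpr hne
  have h2 : (((n-1).factorial : ℝ≥0∞)) * (((n : ℝ≥0∞)) ^ (m+1) * (n.factorial : ℝ≥0∞))⁻¹ ≠ ⊤ := by
    apply ENNReal.mul_ne_top (fact_ne_top _)
    rw [ENNReal.inv_ne_top]
    exact mul_ne_zero (pow_ne_zero _ hne) (fact_ne_zero' _)
  rw [← ENNReal.toReal_eq_toReal_iff' h1 h2]
  rw [ENNReal.toReal_pow, ENNReal.toReal_inv, ENNReal.toReal_mul, ENNReal.toReal_inv,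
    ENNReal.toReal_mul, ENNReal.toReal_pow]
  simp only [ENNReal.toReal_natCast]
  have hfx : (n.factorial : ℝ) = n * (n-1).factorial := by
    conv_lhs => rw [show n = (n-1) + 1 by omega]
    rw [Nat.factorial_succ]
    push_cast [show (n-1 : ℕ) + 1 = n by omega]
    ring
  have h3 : ((n-1).factorial : ℝ) ≠ 0 := Nat.cast_ne_zero.mpr (Nat.factorial_ne_zero _)
  have h5 : (n : ℝ) ≠ 0 := Nat.cast_ne_zero.mpr hn.ne'
  rw [hfx]
  field_simp
  ring_nf
  rw [mul_assoc, mul_mul_mul_comm, ← mul_pow, ← mul_pow, mul_inv_cancel₀ h5, one_pow, one_pow,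
    one_mul]

noncomputable def SymD (m k : ℕ) : ℝ≥0∞ := ∑' n : ℕ, ∑' a : ℕ,
  if 0 < a ∧ 0 < n then
    ((a-1).factorial : ℝ≥0∞) * (((n-1).factorial : ℝ≥0∞)) / (((a+n).factorial : ℝ≥0∞))
      * Eb m a * Eb k n
  else 0

lemma Zenn_eq_Sym (m k : ℕ) : Zenn (m+2) k = SymD m k := by
  rw [Zenn_eq]
  have hsub : (∑' n : {n : ℕ // 0 < n}, ((n.1 : ℝ≥0∞))⁻¹ ^ (m+2) * Eb k n.1)
      = ∑' n : ℕ, if 0 < n then ((n : ℝ≥0∞))⁻¹ ^ (m+2) * Eb k n else 0 := by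
    refine Eq.trans
      (tsum_subtype ({n : ℕ | 0 < n} : Set ℕ) (fun n => ((n : ℝ≥0∞))⁻¹ ^ (m+2) * Eb k n)) ?_
    refine tsum_congr fun n => ?_
    rw [Set.indicator_apply]
    simp [Set.mem_setOf_eq]
  rw [hsub, SymD]
  refine tsum_congr fun n => ?_
  by_cases hn : 0 < n
  · rw [if_pos hn]
    have step1 : ((n : ℝ≥0∞))⁻¹ ^ (m+2) * Eb k n
        = (((n-1).factorial : ℝ≥0∞) * Eb k n)
          * ∑' a : ℕ, (if 0 < a then
              ((a-1).factorial : ℝ≥0∞) / (((a + n).factorial : ℝ≥0∞)) * Eb m a else 0) := by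
      rw [claim1 n hn m, scalar2 m n hn]
      ring
    rw [step1, ← ENNReal.tsum_mul_left]
    refine tsum_congr fun a => ?_
    by_cases ha : 0 < a
    · rw [if_pos ha, if_pos ⟨ha, hn⟩, div_eq_mul_inv, div_eq_mul_inv]
      ring
    · rw [if_neg ha, if_neg (by tauto), mul_zero]
  · rw [if_neg hn]
    symm
    have : ∀ a : ℕ, (if 0 < a ∧ 0 < n then
        ((a-1).factorial : ℝ≥0∞) * (((n-1).factorial : ℝ≥0∞)) / (((a+n).factorial : ℝ≥0∞))
          * Eb m a * Eb k n else 0) = 0 := by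
      intro a
      rw [if_neg (by tauto)]
    rw [tsum_congr this, tsum_zero]

lemma Sym_comm (m k : ℕ) : SymD m k = SymD k m := by
  rw [SymD, ENNReal.tsum_comm, SymD]
  refine tsum_congr fun a => tsum_congr fun n => ?_
  by_cases h : 0 < a ∧ 0 < n
  · rw [if_pos h, if_pos ⟨h.2, h.1⟩, Nat.add_comm n a, div_eq_mul_inv, div_eq_mul_inv]
    ring
  · rw [if_neg h, if_neg (by tauto)]

lemma zetaOnes_eq (M K : ℕ) : zetaOnes M K = (Zenn M K).toReal := by
  rw [Zenn, ENNReal.tsum_toReal_eq]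
  · refine tsum_congr fun v => ?_
    rw [ENNReal.toReal_prod]
    refine Finset.prod_congr rfl fun i _ => ?_
    rw [ENNReal.toReal_div, ENNReal.toReal_pow, ENNReal.toReal_one, ENNReal.toReal_natCast]
  · intro v
    apply (ENNReal.prod_lt_top ?_).ne
    intro i _
    have hv : (v.1 i : ℝ≥0∞) ≠ 0 := Nat.cast_ne_zero.mpr (v.2.2 i).ne'
    exact ENNReal.div_lt_top ENNReal.one_ne_top (pow_ne_zero _ hv)

theorem mzv_duality (n k : ℕ) (hk : k ≤ n) :
    zetaOnes (n - k + 2) k = zetaOnes (k + 2) (n - k) := by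
  have h1 := Zenn_eq_Sym (n - k) k
  have h2 := Zenn_eq_Sym k (n - k)
  rw [zetaOnes_eq, zetaOnes_eq, h1, h2, Sym_comm]
end

section
/- The multiple zeta value ζ(3,1) = Σ_{n₁ > n₂ ≥ 1} 1/(n₁³ n₂) equals ζ(4)/4, where ζ denotes the Riemann zeta function. -/
open scoped Real

namespace MZV31

noncomputable def F (p : ℕ × ℕ) : ℝ := (1 / ((p.1 : ℝ) + 1) ^ 2) * (1 / ((p.2 : ℝ) + 1) ^ 2)
noncomputable def A (p : ℕ × ℕ) : ℝ := 1 / ((((p.1 : ℝ) + (p.2 : ℝ) + 2) ^ 2) * ((p.2 : ℝ) + 1) ^ 2)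
noncomputable def B (p : ℕ × ℕ) : ℝ := 1 / ((((p.1 : ℝ) + (p.2 : ℝ) + 2) ^ 3) * ((p.2 : ℝ) + 1))

lemma F_eq (p : ℕ × ℕ) : F p = 1 / (((p.1 : ℝ) + 1) ^ 2 * ((p.2 : ℝ) + 1) ^ 2) := by
  unfold F; rw [one_div_mul_one_div]

lemma hf : Summable (fun n : ℕ => 1 / ((n : ℝ) + 1) ^ 2) := by
  have h := (Real.summable_one_div_nat_pow (p := 2)).2 (by norm_num)
  have := (summable_nat_add_iff (f := fun n : ℕ => 1 / (n : ℝ) ^ 2) 1).2 h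
  refine this.congr fun n => by push_cast; ring

lemma hF : Summable F := by
  have := Summable.mul_of_nonneg hf hf (fun n => by positivity) (fun n => by positivity)
  exact this.congr fun p => rfl

lemma hA : Summable A := by
  refine Summable.of_nonneg_of_le (fun p => by unfold A; positivity) (fun p => ?_) hF
  rw [F_eq]
  unfold A
  have h1 : (0:ℝ) ≤ (p.1 : ℝ) := Nat.cast_nonneg _
  have h2 : (0:ℝ) ≤ (p.2 : ℝ) := Nat.cast_nonneg _
  have hpos : (0:ℝ) < ((p.1:ℝ) + 1) ^ 2 * ((p.2:ℝ) + 1) ^ 2 := by positivity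
  refine one_div_le_one_div_of_le hpos ?_
  nlinarith [sq_nonneg ((p.2:ℝ) + 1), mul_nonneg h1 h2, mul_nonneg (mul_nonneg h1 h2) h2,
    mul_nonneg (mul_nonneg h1 h1) h2, mul_nonneg (mul_nonneg h2 h2) h2,
    mul_nonneg (mul_nonneg h1 h2) (mul_nonneg h1 h2)]

lemma hB : Summable B := by
  refine Summable.of_nonneg_of_le (fun p => by unfold B; positivity) (fun p => ?_) hF
  rw [F_eq]
  unfold B
  have h1 : (0:ℝ) ≤ (p.1 : ℝ) := Nat.cast_nonneg _
  have h2 : (0:ℝ) ≤ (p.2 : ℝ) := Nat.cast_nonneg _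
  have hpos : (0:ℝ) < ((p.1:ℝ) + 1) ^ 2 * ((p.2:ℝ) + 1) ^ 2 := by positivity
  refine one_div_le_one_div_of_le hpos ?_
  nlinarith [mul_nonneg h1 h2, mul_nonneg (mul_nonneg h1 h2) h2,
    mul_nonneg (mul_nonneg h1 h1) h2, mul_nonneg (mul_nonneg h2 h2) h2,
    mul_nonneg (mul_nonneg h1 h1) h1, mul_nonneg (mul_nonneg h1 h2) h1,
    mul_nonneg (mul_nonneg h1 h2) (mul_nonneg h1 h2)]

lemma hA' : Summable (fun p : ℕ × ℕ => A (Prod.swap p)) :=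
  ((Equiv.prodComm ℕ ℕ).summable_iff (f := A)).2 hA

lemma hB' : Summable (fun p : ℕ × ℕ => B (Prod.swap p)) :=
  ((Equiv.prodComm ℕ ℕ).summable_iff (f := B)).2 hB

lemma tsum_swap (g : ℕ × ℕ → ℝ) : ∑' p : ℕ × ℕ, g (Prod.swap p) = ∑' p, g p :=
  (Equiv.prodComm ℕ ℕ).tsum_eq g

/-- the equiv onto the lower off-diagonal set -/
def eLT : ℕ × ℕ ≃ {p : ℕ × ℕ | p.2 < p.1} where
  toFun p := ⟨(p.1 + p.2 + 1, p.2), by simp only [Set.mem_setOf_eq]; omega⟩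
  invFun v := (v.1.1 - v.1.2 - 1, v.1.2)
  left_inv p := by ext <;> simp <;> omega
  right_inv v := by
    have := v.2
    simp only [Set.mem_setOf_eq] at this
    ext <;> simp <;> omega

def eGT : ℕ × ℕ ≃ {p : ℕ × ℕ | p.1 < p.2} where
  toFun p := ⟨(p.2, p.1 + p.2 + 1), by simp only [Set.mem_setOf_eq]; omega⟩
  invFun v := (v.1.2 - v.1.1 - 1, v.1.1)
  left_inv p := by ext <;> simp <;> omega
  right_inv v := by
    have := v.2
    simp only [Set.mem_setOf_eq] at this
    ext <;> simp <;> omega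

def eDiag : ℕ ≃ {p : ℕ × ℕ | p.1 = p.2} where
  toFun n := ⟨(n, n), rfl⟩
  invFun v := v.1.1
  left_inv n := rfl
  right_inv v := by
    have := v.2
    simp only [Set.mem_setOf_eq] at this
    ext <;> simp [this]

lemma relation1 : ∑' p, F p = 2 * (∑' p, A p) + ∑' n : ℕ, 1 / ((n : ℝ) + 1) ^ 4 := by
  have hsplit : (Set.univ : Set (ℕ × ℕ))
      = {p : ℕ × ℕ | p.2 < p.1} ∪ ({p : ℕ × ℕ | p.1 < p.2} ∪ {p : ℕ × ℕ | p.1 = p.2}) := by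
    ext p; simp; omega
  have hd1 : Disjoint {p : ℕ × ℕ | p.2 < p.1}
      ({p : ℕ × ℕ | p.1 < p.2} ∪ {p : ℕ × ℕ | p.1 = p.2}) := by
    rw [Set.disjoint_left]; rintro p hp hq
    simp only [Set.mem_union, Set.mem_setOf_eq] at hp hq; omega
  have hd2 : Disjoint {p : ℕ × ℕ | p.1 < p.2} {p : ℕ × ℕ | p.1 = p.2} := by
    rw [Set.disjoint_left]; rintro p hp hq
    simp only [Set.mem_setOf_eq] at hp hq; omega
  have h0 : ∑' p, F p
      = ∑' x : ↑({p : ℕ × ℕ | p.2 < p.1} ∪ ({p : ℕ × ℕ | p.1 < p.2} ∪ {p : ℕ × ℕ | p.1 = p.2})),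
          F ↑x := by
    rw [← hsplit]; exact (tsum_univ F).symm
  rw [h0, Summable.tsum_union_disjoint hd1 (hF.subtype _) (hF.subtype _),
    Summable.tsum_union_disjoint hd2 (hF.subtype _) (hF.subtype _)]
  have hLT : ∑' x : ↑{p : ℕ × ℕ | p.2 < p.1}, F ↑x = ∑' p, A p := by
    rw [← eLT.tsum_eq (fun x : ↑{p : ℕ × ℕ | p.2 < p.1} => F ↑x)]
    refine tsum_congr fun p => ?_
    show F (p.1 + p.2 + 1, p.2) = A p
    have h2 : ((p.1 : ℝ) + (p.2 : ℝ) + 2) ≠ 0 := by positivity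
    have h3 : ((p.2 : ℝ) + 1) ≠ 0 := by positivity
    rw [F_eq]; unfold A; push_cast
    rw [div_eq_div_iff (by positivity) (by positivity)]; ring
  have hGT : ∑' x : ↑{p : ℕ × ℕ | p.1 < p.2}, F ↑x = ∑' p, A p := by
    rw [← eGT.tsum_eq (fun x : ↑{p : ℕ × ℕ | p.1 < p.2} => F ↑x)]
    refine tsum_congr fun p => ?_
    show F (p.2, p.1 + p.2 + 1) = A p
    rw [F_eq]; unfold A; push_cast
    rw [div_eq_div_iff (by positivity) (by positivity)]; ring
  have hDiag : ∑' x : ↑{p : ℕ × ℕ | p.1 = p.2}, F ↑x = ∑' n : ℕ, 1 / ((n : ℝ) + 1) ^ 4 := by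
    rw [← eDiag.tsum_eq (fun x : ↑{p : ℕ × ℕ | p.1 = p.2} => F ↑x)]
    refine tsum_congr fun n => ?_
    show F (n, n) = 1 / ((n : ℝ) + 1) ^ 4
    rw [F_eq]
    rw [div_eq_div_iff (by positivity) (by positivity)]; ring
  rw [hLT, hGT, hDiag]; ring

lemma key_identity (x y : ℝ) (hx : 0 ≤ x) (hy : 0 ≤ y) :
    (1 / (x + 1) ^ 2) * (1 / (y + 1) ^ 2)
      = 1 / ((y + x + 2) ^ 2 * (x + 1) ^ 2) + 1 / ((x + y + 2) ^ 2 * (y + 1) ^ 2)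
        + 2 * (1 / ((y + x + 2) ^ 3 * (x + 1))) + 2 * (1 / ((x + y + 2) ^ 3 * (y + 1))) := by
  have h1 : x + 1 ≠ 0 := by positivity
  have h2 : y + 1 ≠ 0 := by positivity
  have h3 : x + y + 2 ≠ 0 := by positivity
  have h4 : y + x + 2 ≠ 0 := by rw [add_comm y x]; exact h3
  field_simp
  ring

lemma relation2 : ∑' p, F p = 2 * (∑' p, A p) + 4 * (∑' p, B p) := by
  have hpt : ∀ p : ℕ × ℕ,
      F p = A (Prod.swap p) + A p + (2 * B (Prod.swap p) + 2 * B p) := by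
    intro p
    have := key_identity (p.1 : ℝ) (p.2 : ℝ) (Nat.cast_nonneg _) (Nat.cast_nonneg _)
    unfold F A B Prod.swap
    simp only []
    rw [this]; ring
  rw [tsum_congr hpt]
  rw [Summable.tsum_add (hA'.add hA) ((hB'.mul_left 2).add (hB.mul_left 2)),
    Summable.tsum_add hA' hA, Summable.tsum_add (hB'.mul_left 2) (hB.mul_left 2),
    tsum_mul_left, tsum_mul_left, tsum_swap A, tsum_swap B]
  ring

lemma four_S : ∑' n : ℕ, 1 / ((n : ℝ) + 1) ^ 4 = 4 * (∑' p, B p) := by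
  have h1 := relation1
  have h2 := relation2
  linarith

lemma hasSum_D : HasSum (fun n : ℕ => 1 / ((n : ℝ) + 1) ^ 4) (π ^ 4 / 90) := by
  have h := (hasSum_nat_add_iff' (f := fun n : ℕ => 1 / (n : ℝ) ^ 4) 1).2 hasSum_zeta_four
  simp only [Finset.range_one, Finset.sum_singleton, Nat.cast_zero] at h
  norm_num at h
  refine h.congr_fun fun n => ?_
  push_cast
  ring

def eV : ℕ × ℕ ≃ {f : Fin 2 → ℕ // StrictAnti f ∧ ∀ i, 0 < f i} where
  toFun p := ⟨![p.1 + p.2 + 2, p.2 + 1], by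
    refine ⟨?_, ?_⟩
    · intro i j hij
      fin_cases i <;> fin_cases j <;> simp_all <;> omega
    · intro i; fin_cases i <;> simp⟩
  invFun v := (v.1 0 - v.1 1 - 1, v.1 1 - 1)
  left_inv p := by ext <;> simp <;> omega
  right_inv v := by
    obtain ⟨f, hanti, hpos⟩ := v
    have h01 : f 1 < f 0 := hanti (by decide : (0 : Fin 2) < 1)
    have h1 : 0 < f 1 := hpos 1
    apply Subtype.ext
    funext i
    fin_cases i <;> simp <;> omega

lemma zetaOnes_eq : zetaOnes 3 1 = ∑' p, B p := by
  unfold zetaOnes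
  rw [← eV.tsum_eq]
  refine tsum_congr fun p => ?_
  rw [Fin.prod_univ_two]
  show (1 : ℝ) / ((![p.1 + p.2 + 2, p.2 + 1] 0 : ℕ) : ℝ) ^ (if (0 : Fin 2) = 0 then 3 else 1)
      * ((1 : ℝ) / ((![p.1 + p.2 + 2, p.2 + 1] 1 : ℕ) : ℝ) ^ (if (1 : Fin 2) = 0 then 3 else 1))
      = B p
  simp only [Matrix.cons_val_zero, Matrix.cons_val_one, Matrix.head_cons, if_pos rfl,
    if_neg (by decide : (1 : Fin 2) ≠ 0), pow_one]
  unfold B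
  push_cast
  rw [one_div_mul_one_div]

end MZV31

theorem mzv_three_one : ((zetaOnes 3 1 : ℝ) : ℂ) = riemannZeta 4 / 4 := by
  have hS : zetaOnes 3 1 = π ^ 4 / 360 := by
    rw [MZV31.zetaOnes_eq]
    have h := MZV31.four_S
    rw [MZV31.hasSum_D.tsum_eq] at h
    linarith
  rw [hS, riemannZeta_four]
  push_cast
  ring
end
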